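/- Fix 1 < α < 9/8 and set K = 8(α−1)/17 > 0. Let ω, σ ∈ {−1,+1}^ℤ, n ∈ ℤ, i ≤ n, and f(n) = n^{1/(3+ε)} for some ε > 0. Define ℓ_i(η) := min{m : ∀ k ≥ m, (1/k)∑_{s=0}^{k−1} η(i+s) ≥ 8/9} and ℓ_i^α analogously with threshold α·8/9. Suppose ℓ_i^α(σ) ≤ n − i (i.e. ∑_{k=i}^{n} σ(k) ≥ α(8/9)(n−i+1)), and suppose ω satisfies ∑_{k=n+1}^{n+p} ω(k) > α(8/9)p for all p ≥ f(n+1). If the hybrid configuration σ_{[i,n]}ω_{(n,∞)} has ℓ_i(σω) > n − i, then n − i + 1 < K^{−1} f(n+1) and ℓ_i(σω) ≤ (n − i + 1) + f(n+1). -/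

import Mathlib

/-!
Write `L = n - i + 1`. For `p ≥ 0` the hybrid sum of length `L + p` splits as the `σ`-block sum
`S ≥ α(8/9)L` plus the `ω`-tail sum `T_p`. Once `p ≥ f(n+1)`, `T_p > α(8/9)p` and the density of
length `L + p` exceeds `8/9` strictly; all spins being `±1`, strictness at one length gives density
`8/9` at the previous one, whence `ℓ_i ≤ L - 1 + ⌈f(n+1)⌉ < L + f(n+1)`. A violating length is thus
`L + p` with `p < f(n+1)`, and `T_p ≥ -p` turns its deficit into `(α - 1)(8/9)L < (17/9)p`.
-/

open Real

/-- `ℓ_i^{a}(η) = min{m : ∀ k ≥ m (k > 0), (1/k) ∑_{s<k} η(i+s) ≥ a·8/9}`. -/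
noncomputable def ellAt (a : ℝ) (i : ℤ) (η : ℤ → ℤ) : ℕ :=
  sInf {m : ℕ | ∀ k ≥ m, 0 < k →
    a * (8 / 9) ≤ (1 / (k : ℝ)) * ∑ s ∈ Finset.range k, ((η (i + s) : ℤ) : ℝ)}

open Finset

theorem Int.sum_Icc_eq_sum_range {M : Type*} [AddCommMonoid M] (g : ℤ → M) {a b : ℤ} {k : ℕ}
    (hk : a + k = b + 1) : ∑ j ∈ Icc a b, g j = ∑ s ∈ Finset.range k, g (a + s) := by
  have hcard : (b + 1 - a).toNat = k := by omega
  rw [Int.Icc_eq_finset_map, sum_map, hcard]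
  rfl

theorem sum_range_piecewise {M : Type*} [AddCommMonoid M] (u v : ℤ → M) {n i : ℤ} {L : ℕ}
    (hL : i + L = n + 1) (p : ℕ) :
    ∑ s ∈ range (L + p), (if i + s ≤ n then u (i + s) else v (i + s)) =
      ∑ j ∈ Icc i n, u j + ∑ j ∈ Icc (n + 1) (n + p), v j := by
  rw [sum_range_add, Int.sum_Icc_eq_sum_range u hL,
    Int.sum_Icc_eq_sum_range v (k := p) (by ring)]
  congr 1 <;> refine sum_congr rfl fun s hs ↦ ?_ <;> rw [mem_range] at hs
  · rw [if_pos (by omega)]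
  · rw [if_neg (by push_cast; omega)]
    congr 1
    push_cast
    omega

theorem ellAt_le_of_forall_le {a : ℝ} {i : ℤ} {η : ℤ → ℤ} {m : ℕ}
    (h : ∀ k ≥ m, 0 < k → a * (8 / 9) * k ≤ ∑ s ∈ range k, (η (i + s) : ℝ)) :
    ellAt a i η ≤ m := by
  refine Nat.sInf_le fun k hk hk0 ↦ ?_
  rw [one_div, inv_mul_eq_div, le_div_iff₀ (by exact_mod_cast hk0)]
  exact h k hk hk0

/-- `9 · (sum) - 8 · (length)` is an integer and drops by at most `1` when a spin `≤ 1` is removed,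
so positivity at length `k + 1` leaves nonnegativity at length `k`. -/
theorem le_sum_range_of_lt_sum_range_succ {g : ℕ → ℤ} (hg : ∀ s, g s ≤ 1) {k : ℕ}
    (h : 8 / 9 * ((k + 1 : ℕ) : ℝ) < ∑ s ∈ range (k + 1), (g s : ℝ)) :
    8 / 9 * (k : ℝ) ≤ ∑ s ∈ range k, (g s : ℝ) := by
  rw [sum_range_succ] at h
  have hint : 8 * ((k : ℤ) + 1) < 9 * (∑ s ∈ range k, g s + g k) := by
    have : (8 * ((k : ℤ) + 1) : ℝ) < 9 * (∑ s ∈ range k, (g s : ℝ) + g k) := by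
      push_cast at h ⊢; linarith
    exact_mod_cast this
  have hk := hg k
  have : 8 * (k : ℤ) ≤ 9 * ∑ s ∈ range k, g s := by omega
  have : (8 * k : ℝ) ≤ 9 * ∑ s ∈ range k, (g s : ℝ) := by exact_mod_cast this
  linarith

theorem ellAt_one_le_pred_of_forall_lt {i : ℤ} {η : ℤ → ℤ} (hη : ∀ k, η k ≤ 1) {m : ℕ}
    (hm : 0 < m) (h : ∀ k ≥ m, 8 / 9 * (k : ℝ) < ∑ s ∈ range k, (η (i + s) : ℝ)) :
    ellAt 1 i η ≤ m - 1 := by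
  refine ellAt_le_of_forall_le fun k hk _ ↦ ?_
  rw [one_mul]
  rcases Nat.lt_or_ge k m with hkm | hkm
  · obtain rfl : k = m - 1 := by omega
    refine le_sum_range_of_lt_sum_range_succ (g := fun s ↦ η (i + s)) (fun s ↦ hη _) ?_
    rw [Nat.sub_add_cancel hm]
    exact h m le_rfl
  · exact (h k hkm).le

theorem exists_sum_le_of_pred_lt_ellAt_one {i : ℤ} {η : ℤ → ℤ} (hη : ∀ k, η k ≤ 1) {m : ℕ}
    (hm : 0 < m) (h : m - 1 < ellAt 1 i η) :
    ∃ k ≥ m, ∑ s ∈ range k, (η (i + s) : ℝ) ≤ 8 / 9 * (k : ℝ) := by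
  by_contra! hgood
  exact h.not_ge (ellAt_one_le_pred_of_forall_lt hη hm hgood)

theorem ellAt_one_le_add_of_forall_lt {i : ℤ} {η : ℤ → ℤ} (hη : ∀ k, η k ≤ 1) {L : ℕ}
    (hL : 0 < L) {F : ℝ} (hF : 0 ≤ F)
    (h : ∀ p : ℕ, F ≤ p → 8 / 9 * ((L + p : ℕ) : ℝ) < ∑ s ∈ range (L + p), (η (i + s) : ℝ)) :
    (ellAt 1 i η : ℝ) ≤ L + F := by
  have hell := ellAt_one_le_pred_of_forall_lt hη (m := L + ⌈F⌉₊) (by omega) fun k hk ↦ by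
    obtain ⟨p, hp, rfl⟩ : ∃ p, ⌈F⌉₊ ≤ p ∧ k = L + p := ⟨k - L, by omega, by omega⟩
    exact h p ((Nat.le_ceil F).trans (by exact_mod_cast hp))
  have hell' : (ellAt 1 i η : ℝ) ≤ ((L + ⌈F⌉₊ - 1 : ℕ) : ℝ) := by exact_mod_cast hell
  rw [Nat.cast_sub (by omega)] at hell'
  push_cast at hell'
  linarith [Nat.ceil_lt_add_one hF]

theorem Int.neg_le_sum_Icc_add {ω : ℤ → ℤ} (hω : ∀ k, -1 ≤ ω k) (a : ℤ) (p : ℕ) :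
    -(p : ℝ) ≤ ∑ k ∈ Icc (a + 1) (a + p), (ω k : ℝ) := by
  have := card_nsmul_le_sum (Icc (a + 1) (a + p)) (fun k ↦ (ω k : ℝ)) (-1)
    fun k _ ↦ by exact_mod_cast hω k
  simpa using this

theorem lt_inv_mul_of_sum_le {α L p F S T : ℝ} (hα : 1 < α) (hS : α * (8 / 9) * L ≤ S)
    (hT : -p ≤ T) (hsum : S + T ≤ 8 / 9 * (L + p)) (hpF : p < F) :
    L < (8 * (α - 1) / 17)⁻¹ * F := by
  rw [inv_div, div_mul_eq_mul_div, lt_div_iff₀ (by linarith)]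
  nlinarith

theorem stmt_12_general (α : ℝ) (hα : 1 < α)
    (K : ℝ) (hK : K = 8 * (α - 1) / 17)
    (σ ω : ℤ → ℤ) (hσval : ∀ k, σ k = -1 ∨ σ k = 1) (hωval : ∀ k, ω k = -1 ∨ ω k = 1)
    (n i : ℤ) (hin : i ≤ n)
    (f : ℤ → ℝ)
    (hσ : α * (8 / 9) * ((n : ℝ) - i + 1) ≤ ∑ k ∈ Finset.Icc i n, ((σ k : ℤ) : ℝ))
    (hω : ∀ p : ℕ, f (n + 1) ≤ (p : ℝ) →
      α * (8 / 9) * (p : ℝ) < ∑ k ∈ Finset.Icc (n + 1) (n + p), ((ω k : ℤ) : ℝ))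
    (η : ℤ → ℤ) (hη : ∀ k, η k = if k ≤ n then σ k else ω k)
    (hviol : (n - i).toNat < ellAt 1 i η) :
    (n : ℝ) - i + 1 < K⁻¹ * f (n + 1) ∧
      (ellAt 1 i η : ℝ) ≤ ((n : ℝ) - i + 1) + f (n + 1) := by
  obtain ⟨L, hL⟩ : ∃ L : ℕ, i + L = n + 1 := ⟨(n + 1 - i).toNat, by omega⟩
  have hLR : (n : ℝ) - i + 1 = L := by
    have := congrArg ((↑) : ℤ → ℝ) hL
    push_cast at this
    linarith
  rw [hLR] at hσ ⊢
  rw [show (n - i).toNat = L - 1 by omega] at hviol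
  set F := f (n + 1)
  have hF : 0 < F := by
    by_contra! hF
    simpa using hω 0 (by simpa using hF)
  have hηle (k : ℤ) : η k ≤ 1 := by rw [hη]; split_ifs <;> grind
  have hsplit (p : ℕ) : ∑ s ∈ range (L + p), (η (i + s) : ℝ) =
      ∑ k ∈ Icc i n, (σ k : ℝ) + ∑ k ∈ Icc (n + 1) (n + p), (ω k : ℝ) := by
    simp only [hη, Int.cast_ite]
    exact sum_range_piecewise (fun k ↦ (σ k : ℝ)) (fun k ↦ (ω k : ℝ)) hL p
  have hdense (p : ℕ) (hp : F ≤ p) :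
      8 / 9 * ((L + p : ℕ) : ℝ) < ∑ s ∈ range (L + p), (η (i + s) : ℝ) := by
    have hL0 : (0 : ℝ) < L := by exact_mod_cast (by omega : 0 < L)
    rw [hsplit]; push_cast; nlinarith [hω p hp]
  refine ⟨?_, ?_⟩
  · obtain ⟨k, hk, hbad⟩ := exists_sum_le_of_pred_lt_ellAt_one hηle (by omega) hviol
    obtain ⟨p, rfl⟩ : ∃ p, k = L + p := ⟨k - L, by omega⟩
    have hpF : (p : ℝ) < F := lt_of_not_ge fun hp ↦ (hdense p hp).not_ge hbad
    rw [hsplit] at hbad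
    push_cast at hbad
    rw [hK]
    exact lt_inv_mul_of_sum_le hα hσ (Int.neg_le_sum_Icc_add (by grind) n p) hbad hpF
  · exact ellAt_one_le_add_of_forall_lt hηle (by omega) hF.le hdense

/-- Case 1 of the proof of Proposition 6.2: with `1 < α < 9/8`,
`K = 8(α−1)/17`, `f(n) = n^{1/(3+ε)}`, if the block `[i,n]` of `σ` is
`α`-good (`∑_{k=i}^n σ(k) ≥ α(8/9)(n−i+1)`), the tail of `ω` beyond `n` is
`α`-good for all `p ≥ f(n+1)`, and the hybrid configuration
`σ_{[i,n]}ω_{(n,∞)}` still has `ℓ_i > n−i`, then `n−i+1 < K⁻¹ f(n+1)` and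
`ℓ_i(σω) ≤ (n−i+1) + f(n+1)`. -/
theorem stmt_12 (α ε : ℝ) (hα : 1 < α) (hα' : α < 9 / 8) (hε : 0 < ε)
    (K : ℝ) (hK : K = 8 * (α - 1) / 17)
    (σ ω : ℤ → ℤ) (hσval : ∀ k, σ k = -1 ∨ σ k = 1) (hωval : ∀ k, ω k = -1 ∨ ω k = 1)
    (n i : ℤ) (hin : i ≤ n)
    (f : ℤ → ℝ) (hf : ∀ m : ℤ, 0 ≤ m → f m = (m : ℝ) ^ ((1 : ℝ) / (3 + ε)))
    (hσ : α * (8 / 9) * ((n : ℝ) - i + 1) ≤ ∑ k ∈ Finset.Icc i n, ((σ k : ℤ) : ℝ))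
    (hω : ∀ p : ℕ, f (n + 1) ≤ (p : ℝ) →
      α * (8 / 9) * (p : ℝ) < ∑ k ∈ Finset.Icc (n + 1) (n + p), ((ω k : ℤ) : ℝ))
    (η : ℤ → ℤ) (hη : ∀ k, η k = if k ≤ n then σ k else ω k)
    (hviol : (n - i).toNat < ellAt 1 i η) :
    (n : ℝ) - i + 1 < K⁻¹ * f (n + 1) ∧
      (ellAt 1 i η : ℝ) ≤ ((n : ℝ) - i + 1) + f (n + 1) :=
  stmt_12_general α hα K hK σ ω hσval hωval n i hin f hσ hω η hη hviol
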